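/- Applying the sequence X on qubit 1 followed by SQiSW gates on consecutive pairs (1,2), (2,3), …, (n−1,n) to |0⟩^⊗n yields the state Σᵢ αᵢ |0…010…0⟩ (1 in position i) with αᵢ = 2^{−i/2} for i ≤ n−1 and αₙ = 2^{−(n−1)/2}; in particular all αᵢ > 0 and Σ|αᵢ|² = 1. -/

import Mathlib

open Complex

/-- Apply the SQiSW gate to qubits `a`, `b` of an `n`-qubit state:
|01⟩↦(|01⟩+i|10⟩)/√2, |10⟩↦(i|01⟩+|10⟩)/√2 on those qubits, identity elsewhere. -/
noncomputable def applySQ (n : ℕ) (a b : Fin n) (ψ : (Fin n → Fin 2) → ℂ) :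
    (Fin n → Fin 2) → ℂ :=
  fun s =>
    if s a = s b then ψ s
    else ((1 : ℂ) / Real.sqrt 2) * ψ s +
      (I / Real.sqrt 2) * ψ (fun k => if k = a then s b else if k = b then s a else s k)

/-- The state obtained from |0…0⟩ by applying X on qubit 1 and then SQiSW on the pairs
(1,2), (2,3), …, (n−1,n). -/
noncomputable def wState (n : ℕ) : (Fin n → Fin 2) → ℂ :=
  (List.finRange (n - 1)).foldl
    (fun ψ j =>
      applySQ n ⟨j.val, by have := j.isLt; omega⟩ ⟨j.val + 1, by have := j.isLt; omega⟩ ψ)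
    (fun s => if s = (fun k : Fin n => if (k : ℕ) = 0 then (1 : Fin 2) else 0) then 1 else 0)

/-- The amplitudes αᵢ = 2^{−i/2} for i ≤ n−1 and αₙ = 2^{−(n−1)/2} (0-indexed here). -/
noncomputable def wAmp (n : ℕ) (i : Fin n) : ℝ :=
  if (i : ℕ) < n - 1 then (2 : ℝ) ^ (-(((i : ℕ) : ℝ) + 1) / 2)
  else (2 : ℝ) ^ (-((n : ℝ) - 1) / 2)

/-!
SQiSW preserves the single-excitation subspace, on which it acts on the amplitudes of its two
qubits as `[[1, i], [i, 1]] / √2`. After the gates on `(0, 1), …, (m - 1, m)` the excitation is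
confined to qubits `≤ m`, so the gate on `(m, m + 1)` replaces the amplitude `a` of qubit `m` by
`a / √2` on qubit `m` and `i a / √2` on qubit `m + 1`. By induction the amplitude of qubit `k` is `iᵏ 2^{-(k+1)/2}` for `k < m`
and `iᵐ 2^{-m/2}` for `k = m`; these squared moduli form a geometric series summing to `1`.
-/

open Function

theorem Pi.single_left_injective {ι M : Type*} [DecidableEq ι] [Zero M] {x : M} (hx : x ≠ 0) :
    Injective fun i : ι => Pi.single i x := fun i j h => by
  by_contra hij
  simpa [Pi.single_apply, hij, hx] using congrFun h i

theorem two_rpow_neg_natCast_div_two (k : ℕ) : (2 : ℝ) ^ (-(k : ℝ) / 2) = (√2)⁻¹ ^ k := by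
  rw [Real.sqrt_eq_rpow, ← Real.rpow_neg zero_le_two, ← Real.rpow_natCast,
    ← Real.rpow_mul zero_le_two]
  ring_nf

theorem sum_range_half_pow_succ_add_half_pow (k : ℕ) :
    ∑ i ∈ Finset.range k, (1 / 2 : ℝ) ^ (i + 1) + (1 / 2) ^ k = 1 := by
  induction k with
  | zero => norm_num
  | succ k ih => rw [Finset.sum_range_succ, pow_succ]; linarith

section SingleExcitation

variable {n : ℕ}

noncomputable def singleExcitation (c : Fin n → ℂ) : (Fin n → Fin 2) → ℂ :=
  fun s => ∑ i, if s = Pi.single i 1 then c i else 0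

theorem singleExcitation_single (c : Fin n → ℂ) (i : Fin n) :
    singleExcitation c (Pi.single i 1) = c i := by
  simp [singleExcitation, (Pi.single_left_injective one_ne_zero).eq_iff]

theorem singleExcitation_eq_zero (c : Fin n → ℂ) {s : Fin n → Fin 2}
    (hs : ∀ i, s ≠ Pi.single i 1) : singleExcitation c s = 0 :=
  Finset.sum_eq_zero fun i _ => if_neg (hs i)

theorem singleExcitation_pi_single (i : Fin n) :
    singleExcitation (Pi.single i 1) = fun s => if s = Pi.single i 1 then 1 else 0 := by
  funext s
  rw [singleExcitation, Finset.sum_eq_single i (fun j _ hj => by simp [hj])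
    (by simp)]
  simp

theorem applySQ_singleExcitation {a b : Fin n} (hab : a ≠ b) (c : Fin n → ℂ) :
    applySQ n a b (singleExcitation c) = singleExcitation fun k =>
      if k = a then (c a + I * c b) / √2
      else if k = b then (I * c a + c b) / √2 else c k := by
  have hswap : ∀ s : Fin n → Fin 2,
      (fun k => if k = a then s b else if k = b then s a else s k) = s ∘ Equiv.swap a b := by
    intro s; funext k; simp only [comp_apply, Equiv.swap_apply_def]; split_ifs <;> rfl
  funext s
  simp only [applySQ, hswap]
  by_cases hs : ∃ i, s = Pi.single i 1
  · obtain ⟨i, rfl⟩ := hs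
    rw [Pi.single_comp_equiv, Equiv.symm_swap]
    simp only [singleExcitation_single, Pi.single_apply, Equiv.swap_apply_def]
    rcases eq_or_ne i a with rfl | hia
    · simp only [↓reduceIte, Ne.symm hab, one_ne_zero, one_div]
      ring
    rcases eq_or_ne i b with rfl | hib
    · simp only [↓reduceIte, hab, Ne.symm hab, zero_ne_one, one_div]
      ring
    · simp [hia, hib, hia.symm, hib.symm]
  · push Not at hs
    have hswapped : ∀ i, s ∘ Equiv.swap a b ≠ Pi.single i 1 := by
      intro i h
      refine hs (Equiv.swap a b i) ?_
      rw [← Equiv.symm_swap a b, ← Pi.single_comp_equiv, ← h]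
      funext k
      simp
    simp only [singleExcitation_eq_zero _ hs, singleExcitation_eq_zero _ hswapped, mul_zero,
      add_zero, ite_self]

end SingleExcitation

/-- The amplitudes after the first `m` gates of the chain, starting from `|10…0⟩`. -/
noncomputable def chainAmp (m k : ℕ) : ℂ :=
  if k ≤ m then I ^ k * ((√2 : ℂ))⁻¹ ^ min (k + 1) m else 0

/-- Indexed by `ℕ`, so that the chain becomes a fold over `List.range`. -/
noncomputable def applySQSucc (n : ℕ) (ψ : (Fin n → Fin 2) → ℂ) (j : ℕ) :
    (Fin n → Fin 2) → ℂ :=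
  if h : j + 1 < n then applySQ n ⟨j, by omega⟩ ⟨j + 1, h⟩ ψ else ψ

theorem chainAmp_of_lt {m k : ℕ} (h : k < m) : chainAmp m k = I ^ k * ((√2 : ℂ))⁻¹ ^ (k + 1) := by
  rw [chainAmp, if_pos h.le, min_eq_left h]

theorem chainAmp_self (m : ℕ) : chainAmp m m = I ^ m * ((√2 : ℂ))⁻¹ ^ m := by
  rw [chainAmp, if_pos le_rfl, min_eq_right m.le_succ]

theorem chainAmp_of_gt {m k : ℕ} (h : m < k) : chainAmp m k = 0 :=
  if_neg h.not_ge

theorem applySQSucc_chainAmp {n m : ℕ} (hm : m + 1 < n) :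
    applySQSucc n (singleExcitation fun k => chainAmp m k) m =
      singleExcitation fun k => chainAmp (m + 1) k := by
  rw [applySQSucc, dif_pos hm, applySQ_singleExcitation (by simp [Fin.ext_iff])]
  congr 1
  funext k
  simp only [Fin.ext_iff]
  split_ifs with hkm hkm'
  · rw [hkm, chainAmp_self, chainAmp_of_gt m.lt_succ_self, chainAmp_of_lt m.lt_succ_self]
    ring
  · rw [hkm', chainAmp_self, chainAmp_of_gt m.lt_succ_self, chainAmp_self]
    ring
  · rcases Nat.lt_or_gt_of_ne hkm with hlt | hgt
    · rw [chainAmp_of_lt hlt, chainAmp_of_lt (by omega)]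
    · rw [chainAmp_of_gt hgt, chainAmp_of_gt (by omega)]

theorem foldl_applySQSucc_range {n m : ℕ} (hm : m < n) :
    (List.range m).foldl (applySQSucc n) (singleExcitation fun k => chainAmp 0 k) =
      singleExcitation fun k => chainAmp m k := by
  induction m with
  | zero => rfl
  | succ m ih =>
    rw [List.range_succ, List.foldl_append, ih (by omega), List.foldl_cons, List.foldl_nil,
      applySQSucc_chainAmp hm]

theorem wState_eq_singleExcitation {n : ℕ} (hn : 1 ≤ n) :
    wState n = singleExcitation fun k => chainAmp (n - 1) k := by
  have hfirst :
      (fun k : Fin n => if (k : ℕ) = 0 then (1 : Fin 2) else 0) = Pi.single ⟨0, hn⟩ 1 := by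
    funext k
    simp [Pi.single_apply, Fin.ext_iff]
  have hinit : (fun k : Fin n => chainAmp 0 k) = Pi.single ⟨0, hn⟩ 1 := by
    funext k
    by_cases hk : (k : ℕ) = 0 <;> simp [chainAmp, Pi.single_apply, Fin.ext_iff, hk]
  have hgate : (fun ψ (j : Fin (n - 1)) =>
      applySQ n ⟨j.val, by have := j.isLt; omega⟩ ⟨j.val + 1, by have := j.isLt; omega⟩ ψ) =
      fun ψ (j : Fin (n - 1)) => applySQSucc n ψ j := by
    funext ψ j
    rw [applySQSucc, dif_pos (by omega)]
  rw [wState, hfirst, ← singleExcitation_pi_single, ← hinit, hgate, ← List.foldl_map,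
    List.map_coe_finRange_eq_range]
  exact foldl_applySQSucc_range (by omega)

theorem norm_chainAmp {m k : ℕ} (hk : k ≤ m) : ‖chainAmp m k‖ = (√2)⁻¹ ^ min (k + 1) m := by
  simp [chainAmp, hk, abs_of_nonneg (Real.sqrt_nonneg 2)]

theorem wAmp_eq {n : ℕ} (hn : 1 ≤ n) (i : Fin n) :
    wAmp n i = (√2)⁻¹ ^ min ((i : ℕ) + 1) (n - 1) := by
  rw [wAmp]
  split_ifs with hi
  · rw [min_eq_left hi, ← two_rpow_neg_natCast_div_two]
    push_cast
    ring_nf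
  · rw [min_eq_right (by omega), ← two_rpow_neg_natCast_div_two, Nat.cast_sub hn]
    push_cast
    ring_nf

theorem sum_wAmp_sq {n : ℕ} (hn : 1 ≤ n) : ∑ i : Fin n, wAmp n i ^ 2 = 1 := by
  obtain ⟨m, rfl⟩ : ∃ m, n = m + 1 := ⟨n - 1, by omega⟩
  have hsq (e : ℕ) : ((√2)⁻¹ ^ e) ^ 2 = (1 / 2 : ℝ) ^ e := by
    rw [← pow_mul, mul_comm, pow_mul, inv_pow, Real.sq_sqrt zero_le_two, one_div]
  simp only [wAmp_eq hn, hsq, Fin.sum_univ_castSucc, Fin.val_castSucc, Fin.val_last,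
    Nat.add_sub_cancel]
  rw [Fin.sum_univ_eq_sum_range (fun i => (1 / 2 : ℝ) ^ min (i + 1) m), min_eq_right m.le_succ,
    Finset.sum_congr rfl fun i hi => by rw [min_eq_left (Finset.mem_range.1 hi)]]
  exact sum_range_half_pow_succ_add_half_pow m

/-- The resulting state is supported on the single-excitation basis states, and up to
single-qubit phases its amplitudes are the positive numbers αᵢ, which are normalized. -/
theorem sqisw_chain_generates_wlike_state (n : ℕ) (hn : 2 ≤ n) :
    (∀ s : Fin n → Fin 2,
        (Finset.univ.filter fun k => s k = 1).card ≠ 1 → wState n s = 0) ∧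
    (∀ i : Fin n,
        ‖wState n (fun k => if k = i then 1 else 0)‖ = wAmp n i) ∧
    (∀ i : Fin n, 0 < wAmp n i) ∧
    (∑ i : Fin n, wAmp n i ^ 2 = 1) := by
  have hn1 : 1 ≤ n := by omega
  have hψ := wState_eq_singleExcitation hn1
  refine ⟨fun s hcard => ?_, fun i => ?_, fun i => ?_, sum_wAmp_sq hn1⟩
  · refine hψ ▸ singleExcitation_eq_zero _ fun i hi => hcard (Finset.card_eq_one.2 ⟨i, ?_⟩)
    ext k
    simp [hi, Pi.single_apply]
  · have hsingle : (fun k => if k = i then (1 : Fin 2) else 0) = Pi.single i 1 :=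
      funext fun k => (Pi.single_apply i 1 k).symm
    rw [hsingle, hψ, singleExcitation_single, norm_chainAmp (by omega), wAmp_eq hn1]
  · rw [wAmp_eq hn1]
    positivity
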